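/- Let S ∈ ℝ^{d×m}, M ∈ ℝ^{m×n}, and suppose S is a δ-embedding for range(M) with δ < 1. Then rank(SM) = rank(M), and cond(SM) ≤ ((1+δ)/(1−δ)) · cond(M), where cond denotes the ratio of largest to smallest nonzero singular value. -/

import Mathlib

open Matrix BigOperators

noncomputable def sval {m n : ℕ} (A : Matrix (Fin m) (Fin n) ℝ) (j : Fin n) : ℝ :=
  Real.sqrt ((show (Aᵀ * A).IsHermitian by
    simpa only [Matrix.conjTranspose_eq_transpose_of_trivial] using
      Matrix.isHermitian_conjTranspose_mul_self A).eigenvalues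
    (Tuple.sort (show (Aᵀ * A).IsHermitian by
    simpa only [Matrix.conjTranspose_eq_transpose_of_trivial] using
      Matrix.isHermitian_conjTranspose_mul_self A).eigenvalues j.rev))

noncomputable def specNorm {m n : ℕ} (A : Matrix (Fin m) (Fin n) ℝ) : ℝ :=
  sSup (Set.range (sval A))

noncomputable def sMin {m n : ℕ} (A : Matrix (Fin m) (Fin n) ℝ) : ℝ :=
  sInf (Set.range (sval A))

noncomputable def frob {m n : ℕ} (A : Matrix (Fin m) (Fin n) ℝ) : ℝ :=
  Real.sqrt (∑ i, ∑ j, (A i j)^2)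

noncomputable def enorm {m : ℕ} (x : Fin m → ℝ) : ℝ := Real.sqrt (∑ i, (x i)^2)

def UpperTri {k n : ℕ} (R : Matrix (Fin k) (Fin n) ℝ) : Prop :=
  ∀ (i : Fin k) (j : Fin n), (j : ℕ) < (i : ℕ) → R i j = 0

def lead {k n : ℕ} (R : Matrix (Fin k) (Fin n) ℝ) (ℓ : ℕ) (h1 : ℓ ≤ k) (h2 : ℓ ≤ n) :
    Matrix (Fin ℓ) (Fin ℓ) ℝ := fun i j => R (Fin.castLE h1 i) (Fin.castLE h2 j)

def topRight {k n : ℕ} (R : Matrix (Fin k) (Fin n) ℝ) (ℓ : ℕ) (h1 : ℓ ≤ k) :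
    Matrix (Fin ℓ) (Fin (n - ℓ)) ℝ :=
  fun i j => R (Fin.castLE h1 i) ⟨ℓ + j.1, by have := j.isLt; omega⟩

def trail {k n : ℕ} (R : Matrix (Fin k) (Fin n) ℝ) (ℓ : ℕ) :
    Matrix (Fin (k - ℓ)) (Fin (n - ℓ)) ℝ :=
  fun i j => R ⟨ℓ + i.1, by have := i.isLt; omega⟩ ⟨ℓ + j.1, by have := j.isLt; omega⟩

/-!
Since `S` is injective on `range M`, the matrices `S * M` and `M` have the same kernel, hence the
same rank. The singular values of `A` are the norms `‖A vᵢ‖` for an orthonormal eigenbasis `v` of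
`Aᵀ * A`, and expanding in this basis gives `‖A x‖ ≤ σ_max ‖x‖` for all `x` and
`‖A x‖ ≥ σ_min⁺ ‖x‖` for `x ⊥ ker A`. Applying the embedding bounds to `M vᵢ`, with `v` the
eigenbasis of `(S M)ᵀ (S M)`, gives `σ_max(S M) ≤ (1 + δ) σ_max(M)`; the `vᵢ` with `S M vᵢ ≠ 0`
are orthogonal to `ker (S M) = ker M`, which gives `σ_min⁺(S M) ≥ (1 - δ) σ_min⁺(M)`.
-/

namespace Matrix

theorem rank_eq_of_ker_mulVecLin_eq {m p n R : Type*} [Fintype n] [Field R]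
    {A : Matrix m n R} {B : Matrix p n R}
    (h : LinearMap.ker A.mulVecLin = LinearMap.ker B.mulVecLin) : A.rank = B.rank := by
  have hA := LinearMap.finrank_range_add_finrank_ker A.mulVecLin
  have hB := LinearMap.finrank_range_add_finrank_ker B.mulVecLin
  rw [h] at hA
  rw [rank, rank]
  omega

theorem isHermitian_transpose_mul_self {m n : Type*} [Fintype m] (A : Matrix m n ℝ) :
    (Aᵀ * A).IsHermitian := by
  simpa only [conjTranspose_eq_transpose_of_trivial] using isHermitian_conjTranspose_mul_self A

end Matrix

section EuclideanNorm

variable {m n : ℕ}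

theorem enorm_nonneg (x : Fin m → ℝ) : 0 ≤ _root_.enorm x := Real.sqrt_nonneg _

theorem enorm_sq (x : Fin m → ℝ) : _root_.enorm x ^ 2 = x ⬝ᵥ x := by
  rw [_root_.enorm, Real.sq_sqrt (by positivity)]
  simp only [dotProduct, sq]

theorem enorm_eq_zero_iff {x : Fin m → ℝ} : _root_.enorm x = 0 ↔ x = 0 := by
  rw [← dotProduct_self_eq_zero, ← enorm_sq, sq_eq_zero_iff]

theorem enorm_mulVec_sq (A : Matrix (Fin m) (Fin n) ℝ) (x : Fin n → ℝ) :
    _root_.enorm (A *ᵥ x) ^ 2 = x ⬝ᵥ (Aᵀ * A) *ᵥ x := by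
  rw [enorm_sq, ← mulVec_mulVec, mulVec_transpose, dotProduct_mulVec, dotProduct_comm]

end EuclideanNorm

section SingularVectors

variable {m n : ℕ} (A : Matrix (Fin m) (Fin n) ℝ)

/-- Right singular vectors of `A`, indexed like the unsorted `eigenvalues` (`sval` is sorted). -/
noncomputable def svec (i : Fin n) : Fin n → ℝ :=
  ((isHermitian_transpose_mul_self A).eigenvectorBasis i).ofLp

theorem sum_dotProduct_svec_mul (x y : Fin n → ℝ) :
    ∑ i, (x ⬝ᵥ svec A i) * (svec A i ⬝ᵥ y) = x ⬝ᵥ y := by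
  have h := (isHermitian_transpose_mul_self A).eigenvectorBasis.sum_inner_mul_inner
    (WithLp.toLp 2 y) (WithLp.toLp 2 x)
  simp only [EuclideanSpace.inner_eq_star_dotProduct, star_trivial] at h
  rw [← h]
  exact Finset.sum_congr rfl fun i _ => mul_comm _ _

theorem svec_dotProduct_svec (i : Fin n) : svec A i ⬝ᵥ svec A i = 1 := by
  have h := (isHermitian_transpose_mul_self A).eigenvectorBasis.inner_eq_one i
  simp only [EuclideanSpace.inner_eq_star_dotProduct, star_trivial] at h
  exact h

theorem enorm_svec (i : Fin n) : _root_.enorm (svec A i) = 1 := by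
  rw [← pow_eq_one_iff_of_nonneg (enorm_nonneg _) two_ne_zero, enorm_sq, svec_dotProduct_svec]

theorem eigenvalues_eq_enorm_sq (i : Fin n) :
    (isHermitian_transpose_mul_self A).eigenvalues i = _root_.enorm (A *ᵥ svec A i) ^ 2 := by
  rw [enorm_mulVec_sq, svec, (isHermitian_transpose_mul_self A).mulVec_eigenvectorBasis,
    dotProduct_smul, ← svec, svec_dotProduct_svec, smul_eq_mul, mul_one]

theorem gram_mulVec_svec (i : Fin n) :
    (Aᵀ * A) *ᵥ svec A i = _root_.enorm (A *ᵥ svec A i) ^ 2 • svec A i := by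
  rw [← eigenvalues_eq_enorm_sq]
  exact (isHermitian_transpose_mul_self A).mulVec_eigenvectorBasis i

theorem svec_dotProduct_gram_mulVec (i : Fin n) (x : Fin n → ℝ) :
    svec A i ⬝ᵥ (Aᵀ * A) *ᵥ x = _root_.enorm (A *ᵥ svec A i) ^ 2 * (svec A i ⬝ᵥ x) := by
  rw [dotProduct_mulVec, ← mulVec_transpose, transpose_mul, transpose_transpose,
    gram_mulVec_svec, smul_dotProduct, smul_eq_mul]

theorem enorm_sq_eq_sum (x : Fin n → ℝ) :
    _root_.enorm x ^ 2 = ∑ i, (svec A i ⬝ᵥ x) ^ 2 := by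
  rw [enorm_sq, ← sum_dotProduct_svec_mul A]
  congr 1 with i
  rw [dotProduct_comm, sq]

theorem enorm_mulVec_sq_eq_sum (x : Fin n → ℝ) :
    _root_.enorm (A *ᵥ x) ^ 2 = ∑ i, _root_.enorm (A *ᵥ svec A i) ^ 2 * (svec A i ⬝ᵥ x) ^ 2 := by
  rw [enorm_mulVec_sq, ← sum_dotProduct_svec_mul A]
  congr 1 with i
  rw [svec_dotProduct_gram_mulVec, dotProduct_comm]
  ring

theorem svec_dotProduct_eq_zero_of_mulVec_eq_zero {i : Fin n} (hi : A *ᵥ svec A i ≠ 0)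
    {w : Fin n → ℝ} (hw : A *ᵥ w = 0) : svec A i ⬝ᵥ w = 0 := by
  have h := svec_dotProduct_gram_mulVec A i w
  rw [← mulVec_mulVec, hw, mulVec_zero, dotProduct_zero, eq_comm] at h
  exact (mul_eq_zero.1 h).resolve_left (pow_ne_zero 2 (enorm_eq_zero_iff.not.2 hi))

theorem range_sval : Set.range (sval A) = Set.range fun i => _root_.enorm (A *ᵥ svec A i) := by
  have hsort : Function.Surjective fun j : Fin n =>
      Tuple.sort (isHermitian_transpose_mul_self A).eigenvalues j.rev :=
    (Tuple.sort _).surjective.comp Fin.rev_surjective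
  rw [← hsort.range_comp fun i => _root_.enorm (A *ᵥ svec A i)]
  congr 1 with j
  simp only [sval, Function.comp_apply]
  rw [eigenvalues_eq_enorm_sq, Real.sqrt_sq (enorm_nonneg _)]

end SingularVectors

section SingularValues

variable {m n : ℕ} (A : Matrix (Fin m) (Fin n) ℝ)

theorem specNorm_nonneg : 0 ≤ specNorm A :=
  Real.sSup_nonneg (by rintro _ ⟨j, rfl⟩; exact Real.sqrt_nonneg _)

theorem enorm_mulVec_svec_le_specNorm (i : Fin n) : _root_.enorm (A *ᵥ svec A i) ≤ specNorm A :=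
  le_csSup (Set.finite_range _).bddAbove (range_sval A ▸ ⟨i, rfl⟩)

theorem enorm_mulVec_le (x : Fin n → ℝ) :
    _root_.enorm (A *ᵥ x) ≤ specNorm A * _root_.enorm x := by
  have hnorm := mul_nonneg (specNorm_nonneg A) (enorm_nonneg x)
  refine (pow_le_pow_iff_left₀ (enorm_nonneg _) hnorm two_ne_zero).1 ?_
  rw [enorm_mulVec_sq_eq_sum, mul_pow, enorm_sq_eq_sum A, Finset.mul_sum]
  gcongr with i
  · exact enorm_nonneg _
  · exact enorm_mulVec_svec_le_specNorm A i

def nonzeroSvals : Set ℝ := {x | (∃ j, x = sval A j) ∧ x ≠ 0}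

theorem mem_nonzeroSvals_iff {s : ℝ} :
    s ∈ nonzeroSvals A ↔ ∃ i, A *ᵥ svec A i ≠ 0 ∧ _root_.enorm (A *ᵥ svec A i) = s := by
  have hrange : (∃ j, s = sval A j) ↔ ∃ i, _root_.enorm (A *ᵥ svec A i) = s := by
    rw [← Set.mem_range, ← range_sval, Set.mem_range]
    simp only [eq_comm]
  simp only [nonzeroSvals, Set.mem_ofPred_eq, hrange]
  constructor
  · rintro ⟨⟨i, rfl⟩, hne⟩
    exact ⟨i, enorm_eq_zero_iff.not.1 hne, rfl⟩
  · rintro ⟨i, hi, rfl⟩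
    exact ⟨⟨i, rfl⟩, enorm_eq_zero_iff.not.2 hi⟩

theorem nonzeroSvals_finite : (nonzeroSvals A).Finite :=
  (Set.finite_range fun i => _root_.enorm (A *ᵥ svec A i)).subset fun _ hs =>
    let ⟨i, _, hi⟩ := (mem_nonzeroSvals_iff A).1 hs; ⟨i, hi⟩

theorem nonzeroSvals_nonempty_iff : (nonzeroSvals A).Nonempty ↔ ∃ x, A *ᵥ x ≠ 0 := by
  constructor
  · rintro ⟨s, hs⟩
    obtain ⟨i, hi, -⟩ := (mem_nonzeroSvals_iff A).1 hs
    exact ⟨svec A i, hi⟩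
  · rintro ⟨x, hx⟩
    by_contra hempty
    have hzero : ∀ i, A *ᵥ svec A i = 0 := fun i => by
      by_contra hi
      exact hempty ⟨_, (mem_nonzeroSvals_iff A).2 ⟨i, hi, rfl⟩⟩
    apply hx
    rw [← enorm_eq_zero_iff, ← sq_eq_zero_iff, enorm_mulVec_sq_eq_sum]
    simp [hzero, enorm_eq_zero_iff.2 rfl]

/-- This is `0` when `A = 0`, since `sInf ∅ = 0`; then `condNumber A = 0` as well. -/
noncomputable def minNonzeroSval : ℝ := sInf (nonzeroSvals A)

theorem minNonzeroSval_nonneg : 0 ≤ minNonzeroSval A :=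
  Real.sInf_nonneg fun _ hs => by
    obtain ⟨i, -, rfl⟩ := (mem_nonzeroSvals_iff A).1 hs
    exact enorm_nonneg _

theorem exists_minNonzeroSval_eq (h : (nonzeroSvals A).Nonempty) :
    ∃ i, A *ᵥ svec A i ≠ 0 ∧ _root_.enorm (A *ᵥ svec A i) = minNonzeroSval A :=
  (mem_nonzeroSvals_iff A).1 (h.csInf_mem (nonzeroSvals_finite A))

theorem minNonzeroSval_pos (h : (nonzeroSvals A).Nonempty) : 0 < minNonzeroSval A := by
  obtain ⟨i, hi, heq⟩ := exists_minNonzeroSval_eq A h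
  rw [← heq]
  exact (enorm_nonneg _).lt_of_ne' (enorm_eq_zero_iff.not.2 hi)

theorem minNonzeroSval_mul_enorm_le {x : Fin n → ℝ} (hx : ∀ w, A *ᵥ w = 0 → x ⬝ᵥ w = 0) :
    minNonzeroSval A * _root_.enorm x ≤ _root_.enorm (A *ᵥ x) := by
  have hnorm := mul_nonneg (minNonzeroSval_nonneg A) (enorm_nonneg x)
  refine (pow_le_pow_iff_left₀ hnorm (enorm_nonneg _) two_ne_zero).1 ?_
  rw [enorm_mulVec_sq_eq_sum, mul_pow, enorm_sq_eq_sum A, Finset.mul_sum]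
  refine Finset.sum_le_sum fun i _ => ?_
  by_cases hi : A *ᵥ svec A i = 0
  · rw [dotProduct_comm, hx _ hi]
    simp
  · gcongr
    · exact minNonzeroSval_nonneg A
    · refine csInf_le (nonzeroSvals_finite A).bddBelow ?_
      exact (mem_nonzeroSvals_iff A).2 ⟨i, hi, rfl⟩

noncomputable def condNumber : ℝ := specNorm A / minNonzeroSval A

end SingularValues

section Embedding

variable {d m n : ℕ} {S : Matrix (Fin d) (Fin m) ℝ} {M : Matrix (Fin m) (Fin n) ℝ} {c C : ℝ}

theorem mul_mulVec_eq_zero_iff (hc : 0 < c)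
    (hlow : ∀ y ∈ LinearMap.range M.mulVecLin, c * _root_.enorm y ≤ _root_.enorm (S *ᵥ y))
    (x : Fin n → ℝ) : (S * M) *ᵥ x = 0 ↔ M *ᵥ x = 0 := by
  rw [← mulVec_mulVec]
  refine ⟨fun h => ?_, fun h => by rw [h, mulVec_zero]⟩
  have hbound := hlow (M *ᵥ x) ⟨x, rfl⟩
  rw [h, enorm_eq_zero_iff.2 rfl] at hbound
  exact enorm_eq_zero_iff.1 <| le_antisymm (nonpos_of_mul_nonpos_right hbound hc) (enorm_nonneg _)

theorem rank_mul_eq_rank (hc : 0 < c)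
    (hlow : ∀ y ∈ LinearMap.range M.mulVecLin, c * _root_.enorm y ≤ _root_.enorm (S *ᵥ y)) :
    (S * M).rank = M.rank :=
  rank_eq_of_ker_mulVecLin_eq <| by
    ext x
    simpa only [LinearMap.mem_ker, mulVecLin_apply] using mul_mulVec_eq_zero_iff hc hlow x

theorem specNorm_mul_le (hC : 0 ≤ C)
    (hup : ∀ y ∈ LinearMap.range M.mulVecLin, _root_.enorm (S *ᵥ y) ≤ C * _root_.enorm y) :
    specNorm (S * M) ≤ C * specNorm M := by
  refine Real.sSup_le ?_ (mul_nonneg hC (specNorm_nonneg M))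
  rw [range_sval]
  rintro _ ⟨i, rfl⟩
  set v := svec (S * M) i
  calc _root_.enorm ((S * M) *ᵥ v) ≤ C * _root_.enorm (M *ᵥ v) := by
        rw [← mulVec_mulVec]; exact hup _ ⟨v, rfl⟩
    _ ≤ C * (specNorm M * _root_.enorm v) := by gcongr; exact enorm_mulVec_le M v
    _ = C * specNorm M := by rw [enorm_svec, mul_one]

theorem nonzeroSvals_mul_nonempty_iff (hc : 0 < c)
    (hlow : ∀ y ∈ LinearMap.range M.mulVecLin, c * _root_.enorm y ≤ _root_.enorm (S *ᵥ y)) :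
    (nonzeroSvals (S * M)).Nonempty ↔ (nonzeroSvals M).Nonempty := by
  simp only [nonzeroSvals_nonempty_iff, ne_eq, mul_mulVec_eq_zero_iff hc hlow]

theorem mul_minNonzeroSval_le (hc : 0 < c)
    (hlow : ∀ y ∈ LinearMap.range M.mulVecLin, c * _root_.enorm y ≤ _root_.enorm (S *ᵥ y)) :
    c * minNonzeroSval M ≤ minNonzeroSval (S * M) := by
  rcases (nonzeroSvals M).eq_empty_or_nonempty with hP | hP
  · rw [minNonzeroSval, hP, Real.sInf_empty, mul_zero]
    exact minNonzeroSval_nonneg _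
  obtain ⟨i, hi, heq⟩ :=
    exists_minNonzeroSval_eq (S * M) ((nonzeroSvals_mul_nonempty_iff hc hlow).2 hP)
  set u := svec (S * M) i
  -- `u` is orthogonal to `ker (S * M)`, which is `ker M`.
  have horth : ∀ w, M *ᵥ w = 0 → u ⬝ᵥ w = 0 := fun w hw =>
    svec_dotProduct_eq_zero_of_mulVec_eq_zero (S * M) hi ((mul_mulVec_eq_zero_iff hc hlow w).2 hw)
  calc c * minNonzeroSval M = c * (minNonzeroSval M * _root_.enorm u) := by
        rw [enorm_svec, mul_one]
    _ ≤ c * _root_.enorm (M *ᵥ u) := by gcongr; exact minNonzeroSval_mul_enorm_le M horth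
    _ ≤ _root_.enorm (S *ᵥ M *ᵥ u) := hlow _ ⟨u, rfl⟩
    _ = minNonzeroSval (S * M) := by rw [mulVec_mulVec, heq]

theorem condNumber_mul_le (hc : 0 < c) (hC : 0 ≤ C)
    (hlow : ∀ y ∈ LinearMap.range M.mulVecLin, c * _root_.enorm y ≤ _root_.enorm (S *ᵥ y))
    (hup : ∀ y ∈ LinearMap.range M.mulVecLin, _root_.enorm (S *ᵥ y) ≤ C * _root_.enorm y) :
    condNumber (S * M) ≤ C / c * condNumber M := by
  rcases (nonzeroSvals M).eq_empty_or_nonempty with hP | hP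
  · have hQ : nonzeroSvals (S * M) = ∅ := by
      rw [← Set.not_nonempty_iff_eq_empty, nonzeroSvals_mul_nonempty_iff hc hlow,
        Set.not_nonempty_iff_eq_empty, hP]
    rw [condNumber, condNumber, minNonzeroSval, minNonzeroSval, hP, hQ, Real.sInf_empty,
      div_zero, div_zero, mul_zero]
  calc condNumber (S * M) ≤ (C * specNorm M) / (c * minNonzeroSval M) :=
        div_le_div₀ (mul_nonneg hC (specNorm_nonneg M)) (specNorm_mul_le hC hup)
          (mul_pos hc (minNonzeroSval_pos M hP)) (mul_minNonzeroSval_le hc hlow)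
    _ = C / c * condNumber M := by rw [condNumber, div_mul_div_comm]

end Embedding

theorem embedding_rank_and_cond {d m n : ℕ} (δ : ℝ) (hδ0 : 0 ≤ δ) (hδ1 : δ < 1)
    (S : Matrix (Fin d) (Fin m) ℝ) (M : Matrix (Fin m) (Fin n) ℝ)
    (hemb : ∀ x ∈ LinearMap.range M.mulVecLin,
      (1 - δ) * _root_.enorm x ≤ _root_.enorm (S.mulVec x) ∧ _root_.enorm (S.mulVec x) ≤ (1 + δ) * _root_.enorm x) :
    (S * M).rank = M.rank ∧
    specNorm (S * M) / sInf {x | (∃ j, x = sval (S * M) j) ∧ x ≠ 0}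
      ≤ ((1 + δ) / (1 - δ)) * (specNorm M / sInf {x | (∃ j, x = sval M j) ∧ x ≠ 0}) := by
  have hδ : 0 < 1 - δ := by linarith
  have hlow := fun x hx => (hemb x hx).1
  exact ⟨rank_mul_eq_rank hδ hlow,
    condNumber_mul_le hδ (by linarith) hlow fun x hx => (hemb x hx).2⟩
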